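/- arXiv:math/0302091 — 6 statements merged into one kernel-verified Lean document; each statement's English description precedes it below -/
import Mathlib

section
/- Let f : ℤ → ℕ∞ (natural numbers extended by infinity) be a function such that f⁻¹(0) is finite with cardinality Δ. Then there exists a sequence u : ℕ → ℤ (indexed from 1) such that for every integer n, f(n) equals the number (possibly infinite) of indices k ≥ 1 with u_k = n, and |u_k| ≤ ⌊(k + Δ)/2⌋ for all k ≥ 1. -/
/-!
List the set `{(n, i) | i < f n}` of "copies" in increasing order of the weight `|n| + i` and let
`u` read off first coordinates; then `n` occurs exactly `f n` times. If the `k`-th copy has weight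
`K`, every `(m, 0)` with `|m| < K` and `f m ≠ 0` is listed before it, and there are at least
`2K - 1 - Δ` of those, so `2 |u k| ≤ 2K ≤ k + Δ`.
-/

open Set Function

section Enumeration

variable {α : Type*} {e : α → ℕ} {S : Set α} {g : ℕ → α}

lemma exists_strictMono_comp_range_eq (he : S.InjOn e) (hS : S.Infinite) :
    ∃ g : ℕ → α, StrictMono (e ∘ g) ∧ range g = S := by
  have : Nonempty α := hS.nonempty.to_type
  have hcodes : (e '' S).Infinite := hS.image he
  have hmem (j : ℕ) : ∃ x ∈ S, e x = Nat.nth (· ∈ e '' S) j :=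
    Nat.nth_mem_of_infinite hcodes j
  refine ⟨fun j => invFunOn e S (Nat.nth (· ∈ e '' S) j), ?_, ?_⟩
  · have hcomp : e ∘ (fun j => invFunOn e S (Nat.nth (· ∈ e '' S) j)) = Nat.nth (· ∈ e '' S) :=
      funext fun j => invFunOn_eq (hmem j)
    rw [hcomp]
    exact Nat.nth_strictMono hcodes
  · refine Subset.antisymm (range_subset_iff.2 fun j => invFunOn_mem (hmem j)) fun x hx => ?_
    obtain ⟨j, hj⟩ := (Nat.range_nth_of_infinite hcodes).ge (mem_image_of_mem e hx)
    exact ⟨j, he (invFunOn_mem (hmem j)) hx ((invFunOn_eq (hmem j)).trans hj)⟩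

lemma mem_image_Iio_of_lt (hg : StrictMono (e ∘ g)) (hrange : range g = S) {x : α} (hx : x ∈ S)
    {j : ℕ} (hlt : e x < e (g j)) : x ∈ g '' Iio j := by
  rw [← hrange] at hx
  obtain ⟨i, rfl⟩ := hx
  exact ⟨i, hg.lt_iff_lt.1 hlt, rfl⟩

end Enumeration

lemma encard_setOf_one_le_and_sub_one (p : ℕ → Prop) :
    {k : ℕ | 1 ≤ k ∧ p (k - 1)}.encard = {j | p j}.encard := by
  have himage : {k : ℕ | 1 ≤ k ∧ p (k - 1)} = (· + 1) '' {j | p j} := by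
    ext k
    constructor
    · rintro ⟨hk, hp⟩
      exact ⟨k - 1, hp, Nat.sub_add_cancel hk⟩
    · rintro ⟨j, hj, rfl⟩
      exact ⟨Nat.le_add_left 1 j, hj⟩
  rw [himage, (add_left_injective 1).encard_image]

lemma encard_setOf_natCast_lt (c : ℕ∞) : {i : ℕ | (i : ℕ∞) < c}.encard = c := by
  cases c with
  | top => simp
  | coe m =>
    have : {i : ℕ | (i : ℕ∞) < m} = ↑(Finset.range m) := by
      ext i
      simp
    rw [this, encard_coe_eq_coe_finsetCard, Finset.card_range]

def copies {β : Type*} (f : β → ℕ∞) : Set (β × ℕ) := {q | (q.2 : ℕ∞) < f q.1}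

section Copies

variable {β : Type*} {f : β → ℕ∞}

lemma encard_copies_inter_fst (n : β) : (copies f ∩ {q | q.1 = n}).encard = f n := by
  have : copies f ∩ {q | q.1 = n} = (n, ·) '' {i : ℕ | (i : ℕ∞) < f n} := by
    ext ⟨m, i⟩
    simp only [copies, mem_inter_iff, mem_ofPred_eq, mem_image, Prod.mk.injEq]
    constructor
    · rintro ⟨hi, rfl⟩
      exact ⟨i, hi, rfl, rfl⟩
    · rintro ⟨i, hi, rfl, rfl⟩
      exact ⟨hi, rfl⟩
  rw [this, (Prod.mk_right_injective n).encard_image, encard_setOf_natCast_lt]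

lemma mk_zero_mem_copies {n : β} (hn : f n ≠ 0) : (n, 0) ∈ copies f := by
  simpa [copies, pos_iff_ne_zero] using hn

lemma copies_infinite [Infinite β] (hf : (f ⁻¹' {0}).Finite) : (copies f).Infinite := by
  have hsub : (fun n => (n, 0)) '' (f ⁻¹' {0})ᶜ ⊆ copies f := by
    rintro _ ⟨n, hn, rfl⟩
    exact mk_zero_mem_copies hn
  exact ((hf.infinite_compl).image (Prod.mk_left_injective 0).injOn).mono hsub

lemma encard_fiber_of_range_eq_copies {g : ℕ → β × ℕ} (hg : Injective g)
    (hrange : range g = copies f) (n : β) : {j | (g j).1 = n}.encard = f n := by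
  rw [← hg.encard_image, show {j | (g j).1 = n} = g ⁻¹' {q | q.1 = n} from rfl,
    image_preimage_eq_range_inter, hrange, encard_copies_inter_fst]

end Copies

def weight (p : ℤ × ℕ) : ℕ := p.1.natAbs + p.2

/-- Orders `ℤ × ℕ` lexicographically by weight, `|n|` and sign of `n`: the last two summands
are below `2 * weight p + 2`, the gap between consecutive values of `2 * weight p ^ 2`. -/
def code (p : ℤ × ℕ) : ℕ := 2 * weight p ^ 2 + 2 * p.1.natAbs + if p.1 < 0 then 1 else 0

lemma code_lt_code_of_weight_lt {p q : ℤ × ℕ} (h : weight p < weight q) : code p < code q := by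
  have hsq : 2 * weight p ^ 2 + 4 * weight p + 2 ≤ 2 * weight q ^ 2 := by
    nlinarith [Nat.pow_le_pow_left h 2]
  have hp : p.1.natAbs ≤ weight p := Nat.le_add_right _ _
  unfold code
  split_ifs <;> omega

lemma code_injective : Injective code := by
  rintro ⟨n, i⟩ ⟨m, j⟩ h
  have hweight : weight (n, i) = weight (m, j) := by
    by_contra hne
    rcases Nat.lt_or_gt_of_ne hne with hlt | hlt
    · exact (code_lt_code_of_weight_lt hlt).ne h
    · exact (code_lt_code_of_weight_lt hlt).ne' h
  simp only [code] at h
  rw [hweight] at h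
  simp only [weight] at hweight
  have hnm : n = m := by split_ifs at h <;> omega
  subst hnm
  simp only [Prod.mk.injEq, true_and]
  omega

lemma two_mul_natAbs_le {f : ℤ → ℕ∞} (hf : (f ⁻¹' {0}).Finite) {g : ℕ → ℤ × ℕ}
    (hg : StrictMono (code ∘ g)) (hrange : range g = copies f) (j : ℕ) :
    2 * (g j).1.natAbs ≤ j + 1 + (f ⁻¹' {0}).ncard := by
  set K := weight (g j)
  set T := Ioo (-(K : ℤ)) K \ f ⁻¹' {0}
  have hT_le : T.ncard ≤ j := by
    have hsub : (fun n => (n, 0)) '' T ⊆ g '' Iio j := by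
      rintro _ ⟨n, ⟨hK, hn⟩, rfl⟩
      refine mem_image_Iio_of_lt hg hrange (mk_zero_mem_copies hn) (code_lt_code_of_weight_lt ?_)
      simp only [mem_Ioo] at hK
      show n.natAbs + 0 < K
      omega
    calc T.ncard = ((fun n => (n, 0)) '' T).ncard :=
          (ncard_image_of_injective _ (Prod.mk_left_injective 0)).symm
      _ ≤ (g '' Iio j).ncard := ncard_le_ncard hsub ((finite_Iio j).image g)
      _ ≤ (Iio j).ncard := ncard_image_le (finite_Iio j)
      _ = j := ncard_Iio_nat j
  have hT_ge : 2 * K - 1 - (f ⁻¹' {0}).ncard ≤ T.ncard := by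
    have hIoo : (Ioo (-(K : ℤ)) K).ncard = 2 * K - 1 := by
      rw [← Finset.coe_Ioo, ncard_coe_finset, Int.card_Ioo]
      omega
    exact hIoo ▸ le_ncard_sdiff _ _ hf
  have hnatAbs_le : (g j).1.natAbs ≤ K := Nat.le_add_right _ _
  omega

/-- Lemma 1: enumeration of a function `f : ℤ → ℕ∞` with `f⁻¹(0)` finite
of cardinality `Δ` by a sequence `u` (indexed from 1) with
`|u k| ≤ ⌊(k + Δ)/2⌋`. -/
theorem exists_enumeration_seq (f : ℤ → ℕ∞) (hf : (f ⁻¹' {0}).Finite)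
    (Δ : ℕ) (hΔ : (f ⁻¹' {0}).ncard = Δ) :
    ∃ u : ℕ → ℤ,
      (∀ n : ℤ, {k : ℕ | 1 ≤ k ∧ u k = n}.encard = f n) ∧
      (∀ k : ℕ, 1 ≤ k → (u k).natAbs ≤ (k + Δ) / 2) := by
  obtain ⟨g, hg, hrange⟩ :=
    exists_strictMono_comp_range_eq code_injective.injOn (copies_infinite hf)
  refine ⟨fun k => (g (k - 1)).1, fun n => ?_, fun k hk => ?_⟩
  · rw [encard_setOf_one_le_and_sub_one (fun j => (g j).1 = n)]
    exact encard_fiber_of_range_eq_copies (hg.injective.of_comp) hrange n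
  · have := two_mul_natAbs_le hf hg hrange (k - 1)
    rw [hΔ] at this
    show (g (k - 1)).1.natAbs ≤ (k + Δ) / 2
    omega
end

section
/- For every nonnegative integer Δ there exists a function f : ℤ → ℕ∞ with |f⁻¹(0)| = Δ and a sequence u : ℕ → ℤ (indexed from 1) such that f(n) equals the number of indices k with u_k = n for every n, and |u_k| = ⌊(k + Δ)/2⌋ for all k ≥ 1. -/
/-- The bound `|u_k| ≤ ⌊(k+Δ)/2⌋` in the enumeration lemma is best possible:
for every `Δ` there are `f` and `u` with `|u_k| = ⌊(k+Δ)/2⌋` for all `k ≥ 1`. -/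
theorem enumeration_bound_best_possible (Δ : ℕ) :
    ∃ (f : ℤ → ℕ∞) (u : ℕ → ℤ),
      (f ⁻¹' {0}).Finite ∧ (f ⁻¹' {0}).ncard = Δ ∧
      (∀ n : ℤ, {k : ℕ | 1 ≤ k ∧ u k = n}.encard = f n) ∧
      (∀ k : ℕ, 1 ≤ k → (u k).natAbs = (k + Δ) / 2) := by
  set u : ℕ → ℤ := fun k =>
    if (k + Δ) % 2 = 0 then (((k + Δ) / 2 : ℕ) : ℤ) else -(((k + Δ) / 2 : ℕ) : ℤ) with hu
  set f : ℤ → ℕ∞ := fun n => {k : ℕ | 1 ≤ k ∧ u k = n}.encard with hf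
  have hset : f ⁻¹' {0}
      = ↑(Finset.Ioc (-(((Δ + 1) / 2 : ℕ) : ℤ)) ((Δ / 2 : ℕ) : ℤ)) := by
      ext n
      simp only [hf, Set.mem_preimage, Set.mem_singleton_iff, Set.encard_eq_zero,
        Finset.coe_Ioc, Set.mem_Ioc, Set.eq_empty_iff_forall_notMem, Set.mem_setOf_eq,
        not_and]
      constructor
      · intro h
        by_contra hn
        -- then n is hit by some k
        rcases le_or_gt (2 * n) (-(Δ : ℤ)) with hle | hgt
        · -- n ≤ 0, hit by odd k+Δ
          have hk := h (2 * n.natAbs + 1 - Δ)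
          have h1 : 1 ≤ 2 * n.natAbs + 1 - Δ := by omega
          apply hk h1
          simp only [hu]
          have he : (2 * n.natAbs + 1 - Δ) + Δ = 2 * n.natAbs + 1 := by omega
          rw [he]
          have : (2 * n.natAbs + 1) % 2 ≠ 0 := by omega
          rw [if_neg this]
          have : (2 * n.natAbs + 1) / 2 = n.natAbs := by omega
          rw [this]
          omega
        · -- 2n > Δ would make n hit by even k+Δ; so must have 2n ≤ Δ and -Δ < 2n, contradiction
          rcases le_or_gt (2 * n) (Δ : ℤ) with hle2 | hgt2
          · exact hn ⟨by omega, by omega⟩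
          · have hk := h (2 * n.natAbs - Δ)
            have h1 : 1 ≤ 2 * n.natAbs - Δ := by omega
            apply hk h1
            simp only [hu]
            have he : (2 * n.natAbs - Δ) + Δ = 2 * n.natAbs := by omega
            rw [he]
            have : (2 * n.natAbs) % 2 = 0 := by omega
            rw [if_pos this]
            omega
      · rintro ⟨ha, hb⟩ k hk hukn
        simp only [hu] at hukn
        split_ifs at hukn with hpar
        · -- n = (k+Δ)/2 with k+Δ even, k ≥ 1, so 2n ≥ Δ+1 > Δ
          have : 2 * ((k + Δ) / 2) = k + Δ := by omega
          omega
        · have : 2 * ((k + Δ) / 2) = k + Δ - 1 := by omega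
          omega
  refine ⟨f, u, ?_, ?_, fun n => rfl, ?_⟩
  · rw [hset]; exact Finset.finite_toSet _
  · rw [hset, Set.ncard_coe_finset, Int.card_Ioc]
    omega
  · intro k hk
    simp only [hu]
    split_ifs <;> simp <;> omega
end

section
/- Let A be a finite set of integers that is a Sidon set of order h (i.e., every integer has at most one representation as a sum of h elements of A, up to reordering), and let d = max{|a| : a ∈ A}. If c is an integer with |c| > (2h−1)d, then A ∪ {c} is also a Sidon set of order h. -/
/-- The representation function of order `h` of `A ⊆ ℤ`: the number of
nondecreasing `h`-tuples of elements of `A` with sum `n`, valued in `ℕ∞`. -/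
noncomputable def repFn (A : Set ℤ) (h : ℕ) (n : ℤ) : ℕ∞ :=
  {g : Fin h → ℤ | Monotone g ∧ (∀ i, g i ∈ A) ∧ ∑ i, g i = n}.encard

/-!
An `h`-element multiset over `A ∪ {c}` splits into `j` copies of `c` and `h - j` elements of `A`,
whose sum is at most `(h - j) d` in absolute value. Two such multisets with equal sums and
`j ≠ k` would give `|c| ≤ |(j - k) c| ≤ (2h - j - k) d ≤ (2h - 1) d`. Hence `j = k`, and the
parts in `A` agree because, padding with copies of one element of `A`, a Sidon set of order `h`
is Sidon of every order `≤ h`.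
-/

open Multiset

/-- Sidon of order `h`, with nondecreasing `h`-tuples encoded as multisets of cardinality `h`. -/
def IsSidonOfOrder {α : Type*} [AddCommMonoid α] (A : Set α) (h : ℕ) : Prop :=
  Set.InjOn Multiset.sum {S : Multiset α | card S = h ∧ ∀ x ∈ S, x ∈ A}

section Sorting

variable {α : Type*} [LinearOrder α]

theorem Multiset.exists_monotone_coe_ofFn_eq {h : ℕ} {S : Multiset α} (hS : card S = h) :
    ∃ g : Fin h → α, Monotone g ∧ (List.ofFn g : Multiset α) = S := by
  have hlen : (S.sort (· ≤ ·)).length = h := by rw [length_sort, hS]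
  subst hlen
  refine ⟨(S.sort (· ≤ ·)).get, ?_, ?_⟩
  · rw [← List.sortedLE_ofFn_iff, List.ofFn_get]
    exact (S.pairwise_sort _).sortedLE
  · rw [List.ofFn_get, sort_eq]

theorem Monotone.eq_of_coe_ofFn_eq {h : ℕ} {g g' : Fin h → α} (hg : Monotone g)
    (hg' : Monotone g') (he : (List.ofFn g : Multiset α) = List.ofFn g') : g = g' :=
  List.ofFn_injective <|
    List.Perm.eq_of_sortedLE hg.sortedLE_ofFn hg'.sortedLE_ofFn (coe_eq_coe.1 he)

end Sorting

theorem repFn_le_one_iff (A : Set ℤ) (h : ℕ) :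
    (∀ n, repFn A h n ≤ 1) ↔ IsSidonOfOrder A h := by
  simp only [repFn, Set.encard_le_one_iff]
  constructor
  · rintro hrep S ⟨hS, hSA⟩ S' ⟨hS', hS'A⟩ hsum
    obtain ⟨g, hg, rfl⟩ := exists_monotone_coe_ofFn_eq hS
    obtain ⟨g', hg', rfl⟩ := exists_monotone_coe_ofFn_eq hS'
    have hgA : ∀ i, g i ∈ A := fun i => hSA _ (by simp)
    have hg'A : ∀ i, g' i ∈ A := fun i => hS'A _ (by simp)
    simp only [sum_coe, List.sum_ofFn] at hsum
    rw [hrep _ g g' ⟨hg, hgA, rfl⟩ ⟨hg', hg'A, hsum.symm⟩]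
  · rintro hSidon n g g' ⟨hg, hgA, rfl⟩ ⟨hg', hg'A, hsum⟩
    refine hg.eq_of_coe_ofFn_eq hg' (hSidon ⟨by simp, ?_⟩ ⟨by simp, ?_⟩ ?_)
    · simpa using hgA
    · simpa using hg'A
    · simp [List.sum_ofFn, hsum]

theorem IsSidonOfOrder.of_le {α : Type*} [AddCancelCommMonoid α] {A : Set α} {h m : ℕ}
    (hA : IsSidonOfOrder A h) {a : α} (ha : a ∈ A) (hm : m ≤ h) : IsSidonOfOrder A m := by
  have hpad : ∀ S : Multiset α, card S = m → (∀ x ∈ S, x ∈ A) →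
      card (S + replicate (h - m) a) = h ∧ ∀ x ∈ S + replicate (h - m) a, x ∈ A := by
    refine fun S hS hSA => ⟨by simp [hS, hm], fun x hx => ?_⟩
    rcases mem_add.1 hx with hx | hx
    exacts [hSA x hx, eq_of_mem_replicate hx ▸ ha]
  rintro S ⟨hS, hSA⟩ T ⟨hT, hTA⟩ hsum
  exact add_right_cancel (hA (hpad S hS hSA) (hpad T hT hTA) (by simp [hsum]))

section SplitOff

variable {α : Type*} [DecidableEq α]

theorem Multiset.replicate_count_add_filter_ne (S : Multiset α) (c : α) :
    replicate (count c S) c + S.filter (· ≠ c) = S := by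
  rw [← filter_eq']
  exact filter_add_not _ S

theorem Multiset.card_eq_count_add_card_filter_ne (S : Multiset α) (c : α) :
    card S = count c S + card (S.filter (· ≠ c)) := by
  conv_lhs => rw [← replicate_count_add_filter_ne S c]
  simp

theorem Multiset.sum_eq_count_nsmul_add_sum_filter_ne [AddCommMonoid α] (S : Multiset α)
    (c : α) : S.sum = count c S • c + (S.filter (· ≠ c)).sum := by
  conv_lhs => rw [← replicate_count_add_filter_ne S c]
  simp

end SplitOff

theorem Multiset.abs_sum_le_card_mul {S : Multiset ℤ} {d : ℤ} (hS : ∀ x ∈ S, |x| ≤ d) :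
    |S.sum| ≤ card S * d := by
  have := sum_le_card_nsmul (S.map abs) d (by simpa using hS)
  simp only [card_map, nsmul_eq_mul] at this
  exact abs_sum_le_sum_abs.trans this

theorem eq_of_mul_add_eq_mul_add_of_abs_le {h j k : ℕ} {c d s t : ℤ} (hd : 0 ≤ d)
    (hc : (2 * h - 1) * d < |c|) (hs : |s| ≤ (h - j) * d) (ht : |t| ≤ (h - k) * d)
    (heq : j * c + s = k * c + t) : j = k := by
  by_contra hne
  have hjk : (1 : ℤ) ≤ |(k : ℤ) - j| :=
    Int.one_le_abs (sub_ne_zero.2 (by exact_mod_cast Ne.symm hne))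
  have hsum : (1 : ℤ) ≤ j + k := by omega
  have : |c| ≤ (2 * h - 1) * d :=
    calc |c| ≤ |(k : ℤ) - j| * |c| := le_mul_of_one_le_left (abs_nonneg c) hjk
      _ = |s - t| := by rw [← abs_mul]; congr 1; linarith
      _ ≤ |s| + |t| := abs_sub _ _
      _ ≤ (2 * h - 1) * d := by nlinarith
  omega

theorem IsSidonOfOrder.union_singleton {A : Set ℤ} {h : ℕ} (hA : IsSidonOfOrder A h)
    (hne : A.Nonempty) {d : ℤ} (hbound : ∀ a ∈ A, |a| ≤ d) {c : ℤ}
    (hc : (2 * h - 1) * d < |c|) : IsSidonOfOrder (A ∪ {c}) h := by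
  obtain ⟨a, ha⟩ := hne
  have hd : 0 ≤ d := (abs_nonneg a).trans (hbound a ha)
  have hrest : ∀ S : Multiset ℤ, card S = h → (∀ x ∈ S, x ∈ A ∪ {c}) →
      card (S.filter (· ≠ c)) = h - count c S ∧ (∀ x ∈ S.filter (· ≠ c), x ∈ A) ∧
        |(S.filter (· ≠ c)).sum| ≤ (h - count c S) * d := by
    intro S hS hSA
    have hcard := card_eq_count_add_card_filter_ne S c
    have hrestA : ∀ x ∈ S.filter (· ≠ c), x ∈ A := fun x hx =>
      (hSA x (mem_of_mem_filter hx)).resolve_right (of_mem_filter (p := (· ≠ c)) hx)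
    refine ⟨by omega, hrestA, ?_⟩
    have hcard' : ((card (S.filter (· ≠ c)) : ℕ) : ℤ) = h - count c S := by omega
    exact hcard' ▸ abs_sum_le_card_mul fun x hx => hbound x (hrestA x hx)
  rintro S ⟨hS, hSA⟩ S' ⟨hS', hS'A⟩ hsum
  obtain ⟨hcard, hrestA, hbd⟩ := hrest S hS hSA
  obtain ⟨hcard', hrestA', hbd'⟩ := hrest S' hS' hS'A
  rw [sum_eq_count_nsmul_add_sum_filter_ne S c, sum_eq_count_nsmul_add_sum_filter_ne S' c,
    nsmul_eq_mul, nsmul_eq_mul] at hsum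
  have hcount : count c S = count c S' := eq_of_mul_add_eq_mul_add_of_abs_le hd hc hbd hbd' hsum
  have hrest_eq : S.filter (· ≠ c) = S'.filter (· ≠ c) := by
    refine (hA.of_le ha (Nat.sub_le h (count c S))) ⟨hcard, hrestA⟩ ⟨?_, hrestA'⟩ ?_
    · rw [hcard', hcount]
    · rw [hcount] at hsum; linarith
  rw [← replicate_count_add_filter_ne S c, ← replicate_count_add_filter_ne S' c, hcount,
    hrest_eq]

theorem sidon_insert_general (A : Set ℤ) (h : ℕ)
    (hSidon : ∀ n : ℤ, repFn A h n ≤ 1)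
    (d : ℤ) (hd : IsGreatest ((fun a : ℤ => |a|) '' A) d)
    (c : ℤ) (hc : (2 * h - 1 : ℤ) * d < |c|) :
    ∀ n : ℤ, repFn (A ∪ {c}) h n ≤ 1 :=
  (repFn_le_one_iff _ h).2 <|
    ((repFn_le_one_iff A h).1 hSidon).union_singleton (Set.image_nonempty.1 ⟨d, hd.1⟩)
      (fun a ha => hd.2 ⟨a, ha, rfl⟩) hc

/-- Lemma 2: if `A` is a finite Sidon set of order `h` with `d = max{|a| : a ∈ A}`
and `|c| > (2h−1)d`, then `A ∪ {c}` is a Sidon set of order `h`. -/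
theorem sidon_insert (A : Set ℤ) (hA : A.Finite) (h : ℕ) (hh : 0 < h)
    (hSidon : ∀ n : ℤ, repFn A h n ≤ 1)
    (d : ℤ) (hd : IsGreatest ((fun a : ℤ => |a|) '' A) d)
    (c : ℤ) (hc : (2 * h - 1 : ℤ) * d < |c|) :
    ∀ n : ℤ, repFn (A ∪ {c}) h n ≤ 1 :=
  sidon_insert_general A h hSidon d hd c hc
end

section
/- Let h ≥ 2 and let f : ℤ → ℕ∞ be a function with f⁻¹(0) finite. Then there exists a set A of integers such that for every integer n, the number of nondecreasing h-tuples of elements of A summing to n equals f(n). -/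
open Filter Multiset

theorem Set.encard_iUnion_of_directed {α ι : Type*} [Nonempty ι] {s : ι → Set α}
    (hs : Directed (· ⊆ ·) s) : (⋃ i, s i).encard = ⨆ i, (s i).encard := by
  refine le_antisymm (ENat.forall_natCast_le_iff_le.mp fun c hc => ?_)
    (iSup_le fun i => encard_mono (subset_iUnion s i))
  obtain ⟨T, hTs, hTc⟩ := exists_subset_encard_eq hc
  have hT : T.Finite := finite_of_encard_eq_coe hTc
  obtain ⟨i, hi⟩ := hs.exists_mem_subset_of_finset_subset_biUnion (s := hT.toFinset) (by simpa)
  calc (c : ℕ∞) = T.encard := hTc.symm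
    _ ≤ (s i).encard := encard_mono (by simpa using hi)
    _ ≤ ⨆ i, (s i).encard := le_iSup (fun i => (s i).encard) i

theorem ENat.le_iSup_of_frequently_min_le {g : ℕ → ℕ∞} (hg : Monotone g) {F : ℕ∞}
    (hF : ∃ᶠ k in atTop, min F (g k + 1) ≤ g (k + 1)) : F ≤ ⨆ k, g k := by
  suffices ∀ c : ℕ, c ≤ F → ∃ k, c ≤ g k from
    ENat.forall_natCast_le_iff_le.mp fun c hc =>
      let ⟨k, hk⟩ := this c hc; hk.trans (le_iSup g k)
  intro c hc
  induction c with
  | zero => exact ⟨0, by simp⟩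
  | succ c ih =>
    obtain ⟨k, hk⟩ := ih ((Nat.cast_le.mpr c.le_succ).trans hc)
    obtain ⟨k', hkk', hk'⟩ := hF.forall_exists_of_atTop k
    refine ⟨k' + 1, le_trans ?_ hk'⟩
    push_cast
    exact le_min hc (by gcongr; exact hk.trans (hg hkk'))

theorem exists_seq_frequently_eq (α : Type*) [Nonempty α] [Countable α] :
    ∃ e : ℕ → α, ∀ a, ∃ᶠ k in atTop, e k = a := by
  obtain ⟨g, hg⟩ := exists_surjective_nat α
  refine ⟨fun k => g k.unpair.1, fun a => frequently_atTop.mpr fun K => ?_⟩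
  obtain ⟨i, rfl⟩ := hg a
  exact ⟨Nat.pair i K, Nat.right_le_pair i K, by simp⟩

theorem Multiset.exists_eq_replicate_add_replicate_add {α : Type*} {x y : α} {A : Set α}
    {s : Multiset α} (hs : ∀ z ∈ s, z ∈ insert x (insert y A)) :
    ∃ a b u, (∀ z ∈ u, z ∈ A) ∧ s = replicate a x + replicate b y + u := by
  induction s using Multiset.induction_on with
  | empty => exact ⟨0, 0, 0, by simp, by simp⟩
  | cons z s ih =>
    obtain ⟨a, b, u, hu, rfl⟩ := ih fun w hw => hs w (mem_cons_of_mem hw)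
    rcases hs z (mem_cons_self z _) with rfl | rfl | hz
    · exact ⟨a + 1, b, u, hu, by simp [replicate_succ]⟩
    · exact ⟨a, b + 1, u, hu, by simp [replicate_succ]⟩
    · refine ⟨a, b, z ::ₘ u, ?_, by simp⟩
      simpa [or_imp, forall_and] using ⟨hz, hu⟩

theorem Multiset.abs_sum_le_card_nsmul {α : Type*} [AddCommGroup α] [LinearOrder α]
    [IsOrderedAddMonoid α] {s : Multiset α} {M : α} (hs : ∀ z ∈ s, |z| ≤ M) :
    |s.sum| ≤ card s • M :=
  abs_sum_le_sum_abs.trans <| by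
    simpa using sum_le_card_nsmul (s.map abs) M (by simpa using hs)

section Reps

variable {α : Type*} [AddCommMonoid α]

def reps (A : Set α) (h : ℕ) (n : α) : Set (Multiset α) :=
  {s | card s = h ∧ (∀ z ∈ s, z ∈ A) ∧ s.sum = n}

def UniqueSumsBelow (h : ℕ) (A : Set α) : Prop :=
  ∀ j < h, ∀ n, (reps A j n).Subsingleton

theorem reps_mono {A B : Set α} (hAB : A ⊆ B) (h : ℕ) (n : α) : reps A h n ⊆ reps B h n :=
  fun _ ⟨hc, hs, hn⟩ => ⟨hc, fun z hz => hAB (hs z hz), hn⟩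

theorem eq_zero_of_mem_reps_empty {h : ℕ} {n : α} {s : Multiset α} (hs : s ∈ reps ∅ h n) :
    s = 0 :=
  eq_zero_of_forall_notMem hs.2.1

theorem reps_empty {h : ℕ} (hh : h ≠ 0) (n : α) : reps (∅ : Set α) h n = ∅ :=
  Set.eq_empty_of_forall_notMem fun _ hs =>
    hh (by rw [← hs.1, eq_zero_of_mem_reps_empty hs, card_zero])

theorem uniqueSumsBelow_empty (h : ℕ) : UniqueSumsBelow h (∅ : Set α) :=
  fun _ _ _ _ hs _ hs' => (eq_zero_of_mem_reps_empty hs).trans (eq_zero_of_mem_reps_empty hs').symm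

theorem reps_iUnion {ι : Type*} [Nonempty ι] {A : ι → Set α} (hA : Directed (· ⊆ ·) A)
    (h : ℕ) (n : α) : reps (⋃ i, A i) h n = ⋃ i, reps (A i) h n := by
  classical
  refine Set.Subset.antisymm (fun s ⟨hc, hs, hn⟩ => ?_)
    (Set.iUnion_subset fun i => reps_mono (Set.subset_iUnion A i) h n)
  obtain ⟨i, hi⟩ := hA.exists_mem_subset_of_finset_subset_biUnion (s := s.toFinset)
    fun z hz => Set.mem_iUnion.mpr (by simpa using hs z (by simpa using hz))
  exact Set.mem_iUnion.mpr ⟨i, hc, fun z hz => hi (by simpa using hz), hn⟩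

theorem encard_reps_iUnion_eq {A : ℕ → Set α} (hA : Monotone A) {e : ℕ → α}
    (he : ∀ a, ∃ᶠ k in atTop, e k = a) {f : α → ℕ∞} {h : ℕ}
    (hle : ∀ k a, (reps (A k) h a).encard ≤ f a)
    (hstep : ∀ k, min (f (e k)) ((reps (A k) h (e k)).encard + 1) ≤
      (reps (A (k + 1)) h (e k)).encard)
    (a : α) : (reps (⋃ k, A k) h a).encard = f a := by
  have hmono : Monotone fun k => reps (A k) h a := fun k l hkl => reps_mono (hA hkl) h a
  rw [reps_iUnion hA.directed_le, Set.encard_iUnion_of_directed hmono.directed_le]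
  exact le_antisymm (iSup_le fun k => hle k a)
    (ENat.le_iSup_of_frequently_min_le (fun k l hkl => Set.encard_mono (hmono hkl))
      ((he a).mono fun k hk => hk ▸ hstep k))

end Reps

theorem repFn_eq_encard_reps (A : Set ℤ) (h : ℕ) (n : ℤ) :
    repFn A h n = (reps A h n).encard := by
  have himage : (fun g : Fin h → ℤ => (List.ofFn g : Multiset ℤ)) ''
      {g | Monotone g ∧ (∀ i, g i ∈ A) ∧ ∑ i, g i = n} = reps A h n := by
    ext s
    constructor
    · rintro ⟨g, ⟨-, hA, hn⟩, rfl⟩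
      refine ⟨by simp, fun z hz => ?_, by simp [List.sum_ofFn, hn]⟩
      obtain ⟨i, rfl⟩ := List.mem_ofFn.mp (mem_coe.mp hz)
      exact hA i
    · rintro ⟨hc, hA, hn⟩
      set l := s.sort (· ≤ ·)
      have hl : l.length = h := by rw [length_sort, hc]
      have hofFn : List.ofFn (fun i => l.get (Fin.cast hl.symm i)) = l :=
        (List.ofFn_congr hl l.get).symm.trans (List.ofFn_get l)
      refine ⟨fun i => l.get (Fin.cast hl.symm i), ⟨?_, fun i => hA _ ?_, ?_⟩, ?_⟩
      · rw [← List.sortedLE_ofFn_iff, hofFn]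
        exact (pairwise_sort s _).sortedLE
      · exact (mem_sort _).mp (List.get_mem l _)
      · rw [← List.sum_ofFn, hofFn, ← sum_coe, sort_eq, hn]
      · simp only [hofFn, l, sort_eq]
  rw [repFn, ← himage, Set.InjOn.encard_image]
  rintro g ⟨hg, -⟩ g' ⟨hg', -⟩ hgg'
  exact List.ofFn_injective <| (coe_eq_coe.mp hgg').eq_of_sortedLE
    (List.sortedLE_ofFn_iff.mpr hg) (List.sortedLE_ofFn_iff.mpr hg')

/-- `b - a (h - 1)` is the coefficient of `t` in the sum of `a` copies of `n - (h - 1) t` and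
`b` copies of `t`. -/
theorem eq_or_eq_of_sub_mul_eq {h a b a' b' : ℕ} (hab : a + b ≤ h) (hab' : a' + b' ≤ h)
    (hc : (b : ℤ) - a * (h - 1) = b' - a' * (h - 1)) :
    (a = a' ∧ b = b') ∨ (a = 0 ∧ b = 0 ∧ a' = 1 ∧ b' = h - 1) ∨
      (a' = 0 ∧ b' = 0 ∧ a = 1 ∧ b = h - 1) := by
  have hsize : (a' + b' : ℤ) = a + b + (a' - a) * h := by linear_combination -hc
  have : (a' : ℤ) - a ≤ 1 := by nlinarith
  have : -1 ≤ (a' : ℤ) - a := by nlinarith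
  obtain hd | hd | hd : (a' : ℤ) - a = -1 ∨ (a' : ℤ) - a = 0 ∨ (a' : ℤ) - a = 1 := by omega
  all_goals rw [hd] at hsize; omega

theorem eq_of_mul_add_eq_mul_add {c c' r r' t R : ℤ} (hr : |r| ≤ R) (hr' : |r'| ≤ R)
    (ht : 2 * R < t) (h : c * t + r = c' * t + r') : c = c' := by
  have ht0 : 0 < t := by linarith [abs_nonneg r]
  have hbound : |c - c'| * t < 1 * t := by
    rw [one_mul, ← abs_of_pos ht0, ← abs_mul, show (c - c') * t = r' - r by linear_combination h,
      abs_of_pos ht0]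
    linarith [abs_sub r' r]
  exact sub_eq_zero.mp (Int.abs_lt_one_iff.mp (lt_of_mul_lt_mul_right hbound ht0.le))

theorem sub_le_abs_mul_add {c r t R : ℤ} (hc : c ≠ 0) (hr : |r| ≤ R) (ht : 0 ≤ t) :
    t - R ≤ |c * t + r| := by
  have : t ≤ |c * t| := by
    rw [abs_mul, abs_of_nonneg ht]
    exact le_mul_of_one_le_left ht (Int.one_le_abs hc)
  have := abs_sub (c * t + r) r
  rw [add_sub_cancel_right] at this
  linarith

def extension (A : Set ℤ) (h : ℕ) (n t : ℤ) : Set ℤ :=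
  insert (n - (h - 1) * t) (insert t A)

def newRep (h : ℕ) (n t : ℤ) : Multiset ℤ :=
  (n - (h - 1) * t) ::ₘ replicate (h - 1) t

section Extension

variable {h : ℕ} {A : Set ℤ} {M n t : ℤ}

theorem subset_extension : A ⊆ extension A h n t :=
  fun _ hz => Set.mem_insert_of_mem _ (Set.mem_insert_of_mem _ hz)

theorem sum_replicate_add_replicate_add (a b : ℕ) (u : Multiset ℤ) :
    (replicate a (n - (h - 1) * t) + replicate b t + u).sum =
      (b - a * (h - 1)) * t + (a * n + u.sum) := by
  simp only [sum_add, sum_replicate, nsmul_eq_mul]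
  ring

theorem abs_mul_add_sum_le (hM0 : 0 ≤ M) (hM : ∀ z ∈ A, |z| ≤ M) {a : ℕ} {u : Multiset ℤ}
    (hu : ∀ z ∈ u, z ∈ A) (hcard : a + card u ≤ h) : |a * n + u.sum| ≤ h * (|n| + M) := by
  have hu_sum : |u.sum| ≤ card u * M := by
    simpa using abs_sum_le_card_nsmul fun z hz => hM z (hu z hz)
  have ha : (a : ℤ) ≤ h := by omega
  have hc : (card u : ℤ) ≤ h := by omega
  calc |a * n + u.sum| ≤ a * |n| + card u * M := by
        grw [abs_add_le, abs_mul, Nat.abs_cast, hu_sum]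
    _ ≤ h * (|n| + M) := by nlinarith [abs_nonneg n]

theorem sub_mul_notMem (hh : 2 ≤ h) (hM : ∀ z ∈ A, |z| ≤ M) (ht : |n| + M < t) :
    n - (h - 1) * t ∉ A := fun hx => by
  have hM0 : 0 ≤ M := (abs_nonneg _).trans (hM _ hx)
  have : t ≤ (h - 1) * t := le_mul_of_one_le_left (by linarith [abs_nonneg n])
    (by linarith [show (2 : ℤ) ≤ h by exact_mod_cast hh])
  linarith [(abs_le.mp (hM _ hx)).1, le_abs_self n]

theorem newRep_mem_reps_extension (hh : 1 ≤ h) : newRep h n t ∈ reps (extension A h n t) h n := by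
  refine ⟨by simp [newRep]; omega, fun z hz => ?_, by simp [newRep, Nat.cast_sub hh]⟩
  rcases mem_cons.mp hz with rfl | hz
  exacts [Or.inl rfl, Or.inr (Or.inl (eq_of_mem_replicate hz))]

theorem eq_of_mem_reps_extension (hA : UniqueSumsBelow h A) (hM0 : 0 ≤ M)
    (hM : ∀ z ∈ A, |z| ≤ M) (ht : 2 * (h * (|n| + M)) < t) {j : ℕ} (hj : j ≤ h) {m : ℤ}
    {s s' : Multiset ℤ} (hs : s ∈ reps (extension A h n t) j m)
    (hs' : s' ∈ reps (extension A h n t) j m)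
    (hsA : ¬ ∀ z ∈ s, z ∈ A) (hs'A : ¬ ∀ z ∈ s', z ∈ A) : s = s' := by
  obtain ⟨hcard, hmem, hsum⟩ := hs
  obtain ⟨hcard', hmem', hsum'⟩ := hs'
  obtain ⟨a, b, u, hu, rfl⟩ := exists_eq_replicate_add_replicate_add hmem
  obtain ⟨a', b', u', hu', rfl⟩ := exists_eq_replicate_add_replicate_add hmem'
  simp only [card_add, card_replicate] at hcard hcard'
  have hab : a + b ≠ 0 := fun h0 => hsA <| by
    obtain ⟨rfl, rfl⟩ : a = 0 ∧ b = 0 := by omega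
    simpa using hu
  have hab' : a' + b' ≠ 0 := fun h0 => hs'A <| by
    obtain ⟨rfl, rfl⟩ : a' = 0 ∧ b' = 0 := by omega
    simpa using hu'
  rw [sum_replicate_add_replicate_add] at hsum hsum'
  have hcoeff := eq_of_mul_add_eq_mul_add (abs_mul_add_sum_le hM0 hM hu (by omega))
    (abs_mul_add_sum_le hM0 hM hu' (by omega)) ht (hsum.trans hsum'.symm)
  obtain ⟨rfl, rfl⟩ : a = a' ∧ b = b' := by
    rcases eq_or_eq_of_sub_mul_eq (by omega) (by omega) hcoeff with hab | hab | hab <;> omega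
  rw [hA (card u) (by omega) u.sum ⟨rfl, hu, rfl⟩ ⟨by omega, hu', by linarith⟩]

theorem sub_le_abs_of_mem_reps_extension (hM0 : 0 ≤ M) (hM : ∀ z ∈ A, |z| ≤ M) (ht : 0 ≤ t)
    {j : ℕ} (hj : j ≤ h) {m : ℤ} {s : Multiset ℤ} (hs : s ∈ reps (extension A h n t) j m)
    (hsA : ¬ ∀ z ∈ s, z ∈ A) (hs₀ : s ≠ newRep h n t) : t - h * (|n| + M) ≤ |m| := by
  obtain ⟨hcard, hmem, rfl⟩ := hs
  obtain ⟨a, b, u, hu, rfl⟩ := exists_eq_replicate_add_replicate_add hmem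
  simp only [card_add, card_replicate] at hcard
  rw [sum_replicate_add_replicate_add]
  refine sub_le_abs_mul_add (fun hc => ?_) (abs_mul_add_sum_le hM0 hM hu (by omega)) ht
  rcases eq_or_eq_of_sub_mul_eq (h := h) (a := a) (b := b) (a' := 0) (b' := 0) (by omega)
    (by omega) (by simpa using hc) with hab | hab | hab
  · exact hsA (by obtain ⟨rfl, rfl⟩ := hab; simpa using hu)
  · omega
  · obtain ⟨-, -, rfl, rfl⟩ := hab
    obtain rfl : u = 0 := card_eq_zero.mp (by omega)
    exact hs₀ (by simp [newRep, singleton_add])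

theorem notMem_reps_of_mem_reps_extension (hM0 : 0 ≤ M) (hM : ∀ z ∈ A, |z| ≤ M)
    (ht : 2 * (h * (|n| + M)) < t) {j : ℕ} (hj : j ≤ h) {m : ℤ} {s : Multiset ℤ}
    (hs : s ∈ reps (extension A h n t) j m) (hsA : ¬ ∀ z ∈ s, z ∈ A)
    (hs₀ : s ≠ newRep h n t) (s' : Multiset ℤ) : s' ∉ reps A j m := by
  rintro ⟨hcard, hs'A, hsum⟩
  have hR : 0 ≤ (h : ℤ) * (|n| + M) := by positivity
  have := abs_mul_add_sum_le (h := h) (n := n) (a := 0) hM0 hM hs'A (by omega)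
  rw [Nat.cast_zero, zero_mul, zero_add, hsum] at this
  linarith [sub_le_abs_of_mem_reps_extension hM0 hM (by linarith) hj hs hsA hs₀]

theorem uniqueSumsBelow_extension (hA : UniqueSumsBelow h A) (hM0 : 0 ≤ M)
    (hM : ∀ z ∈ A, |z| ≤ M) (ht : 2 * (h * (|n| + M)) < t) :
    UniqueSumsBelow h (extension A h n t) := by
  intro j hj m s hs s' hs'
  have hne : ∀ {s}, s ∈ reps (extension A h n t) j m → s ≠ newRep h n t := fun hs hs₀ => by
    have := hs.1
    simp [hs₀, newRep] at this
    omega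
  by_cases hsA : ∀ z ∈ s, z ∈ A <;> by_cases hs'A : ∀ z ∈ s', z ∈ A
  · exact hA j hj m ⟨hs.1, hsA, hs.2.2⟩ ⟨hs'.1, hs'A, hs'.2.2⟩
  · exact (notMem_reps_of_mem_reps_extension hM0 hM ht hj.le hs' hs'A (hne hs') s
      ⟨hs.1, hsA, hs.2.2⟩).elim
  · exact (notMem_reps_of_mem_reps_extension hM0 hM ht hj.le hs hsA (hne hs) s'
      ⟨hs'.1, hs'A, hs'.2.2⟩).elim
  · exact eq_of_mem_reps_extension hA hM0 hM ht hj.le hs hs' hsA hs'A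

theorem encard_reps_extension_self (hh : 2 ≤ h) (hA : UniqueSumsBelow h A) (hM0 : 0 ≤ M)
    (hM : ∀ z ∈ A, |z| ≤ M) (ht : 2 * (h * (|n| + M)) < t) :
    (reps (extension A h n t) h n).encard = (reps A h n).encard + 1 := by
  have hs₀ : newRep h n t ∈ reps (extension A h n t) h n := newRep_mem_reps_extension (by omega)
  have hs₀A : ¬ ∀ z ∈ newRep h n t, z ∈ A := fun h₀ => by
    have : |n| + M ≤ h * (|n| + M) := le_mul_of_one_le_left (by positivity) (by norm_cast; omega)
    exact sub_mul_notMem hh hM (by linarith [abs_nonneg n]) (h₀ _ (mem_cons_self _ _))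
  have hreps : reps (extension A h n t) h n = insert (newRep h n t) (reps A h n) := by
    refine (Set.insert_subset hs₀ (reps_mono subset_extension h n)).antisymm' fun s hs => ?_
    by_cases hsA : ∀ z ∈ s, z ∈ A
    · exact Or.inr ⟨hs.1, hsA, hs.2.2⟩
    · exact Or.inl (eq_of_mem_reps_extension hA hM0 hM ht le_rfl hs hs₀ hsA hs₀A)
  rw [hreps, Set.encard_insert_of_notMem fun hs₀' => hs₀A hs₀'.2.1]

theorem reps_extension_of_ne (hA : UniqueSumsBelow h A) (hM0 : 0 ≤ M)
    (hM : ∀ z ∈ A, |z| ≤ M) (ht : 2 * (h * (|n| + M)) < t) {m : ℤ} (hmn : m ≠ n) :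
    reps (extension A h n t) h m = reps A h m ∨
      t - h * (|n| + M) ≤ |m| ∧ (reps (extension A h n t) h m).Subsingleton := by
  by_cases hsub : reps (extension A h n t) h m ⊆ reps A h m
  · exact Or.inl (hsub.antisymm (reps_mono subset_extension h m))
  obtain ⟨s, hs, hsA'⟩ := Set.not_subset.mp hsub
  have hsA : ¬ ∀ z ∈ s, z ∈ A := fun hsA => hsA' ⟨hs.1, hsA, hs.2.2⟩
  have hs₀ : s ≠ newRep h n t := by
    rintro rfl
    have hcard := hs.1
    simp only [newRep, card_cons, card_replicate] at hcard
    exact hmn (hs.2.2.symm.trans (newRep_mem_reps_extension (A := A) (by omega)).2.2)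
  have hs_eq : ∀ s' ∈ reps (extension A h n t) h m, s' = s := by
    intro s' hs'
    by_cases hs'A : ∀ z ∈ s', z ∈ A
    · exact (notMem_reps_of_mem_reps_extension hM0 hM ht le_rfl hs hsA hs₀ s'
        ⟨hs'.1, hs'A, hs'.2.2⟩).elim
    · exact eq_of_mem_reps_extension hA hM0 hM ht le_rfl hs' hs hs'A hsA
  have ht0 : 0 ≤ t := by linarith [show 0 ≤ (h : ℤ) * (|n| + M) by positivity]
  exact Or.inr ⟨sub_le_abs_of_mem_reps_extension hM0 hM ht0 le_rfl hs hsA hs₀,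
    fun s₁ h₁ s₂ h₂ => (hs_eq s₁ h₁).trans (hs_eq s₂ h₂).symm⟩

end Extension

theorem exists_step {h : ℕ} (hh : 2 ≤ h) {f : ℤ → ℕ∞} {N : ℤ} (hN : ∀ m, f m = 0 → |m| ≤ N)
    (A : Set ℤ) (hfin : A.Finite) (hA : UniqueSumsBelow h A)
    (hAf : ∀ m, (reps A h m).encard ≤ f m) (n : ℤ) :
    ∃ B : Set ℤ, A ⊆ B ∧ B.Finite ∧ UniqueSumsBelow h B ∧ (∀ m, (reps B h m).encard ≤ f m) ∧
      min (f n) ((reps A h n).encard + 1) ≤ (reps B h n).encard := by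
  by_cases hn : f n ≤ (reps A h n).encard
  · exact ⟨A, subset_rfl, hfin, hA, hAf, (min_le_left _ _).trans hn⟩
  obtain ⟨M, hM0, hM⟩ : ∃ M : ℤ, 0 ≤ M ∧ ∀ z ∈ A, |z| ≤ M :=
    let ⟨M, hM⟩ := (hfin.image abs).bddAbove
    ⟨max M 0, le_max_right M 0, fun z hz => (hM ⟨z, hz, rfl⟩).trans (le_max_left M 0)⟩
  obtain ⟨t, ht, htN⟩ : ∃ t : ℤ, 2 * (h * (|n| + M)) < t ∧ h * (|n| + M) + N < t :=
    have : 0 ≤ (h : ℤ) * (|n| + M) := by positivity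
    ⟨2 * (h * (|n| + M)) + |N| + 1, by linarith [abs_nonneg N], by linarith [le_abs_self N]⟩
  have hcard := encard_reps_extension_self hh hA hM0 hM ht
  refine ⟨extension A h n t, subset_extension, (hfin.insert t).insert _,
    uniqueSumsBelow_extension hA hM0 hM ht, fun m => ?_, hcard ▸ min_le_right _ _⟩
  rcases eq_or_ne m n with rfl | hmn
  · exact hcard ▸ Order.add_one_le_of_lt (not_le.mp hn)
  rcases reps_extension_of_ne hA hM0 hM ht hmn with heq | ⟨hm, hsub⟩
  · exact heq ▸ hAf m
  · exact (Set.encard_le_one_iff_subsingleton.mpr hsub).trans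
      (Order.one_le_iff_ne_zero.mpr fun h0 => by linarith [hN m h0])

/-- Every function `f : ℤ → ℕ∞` with `f⁻¹(0)` finite is the representation
function of order `h` of some set of integers, for every `h ≥ 2`. -/
theorem every_function_is_representation_function (h : ℕ) (hh : 2 ≤ h)
    (f : ℤ → ℕ∞) (hf : (f ⁻¹' {0}).Finite) :
    ∃ A : Set ℤ, ∀ n : ℤ, repFn A h n = f n := by
  obtain ⟨N, hN⟩ := (hf.image abs).bddAbove
  obtain ⟨e, he⟩ := exists_seq_frequently_eq ℤ
  choose! next hnext using exists_step hh (f := f) fun m hm => hN ⟨m, hm, rfl⟩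
  let A : ℕ → Set ℤ := fun k => Nat.rec ∅ (fun k B => next B (e k)) k
  have hA : ∀ k, (A k).Finite ∧ UniqueSumsBelow h (A k) ∧ ∀ m, (reps (A k) h m).encard ≤ f m := by
    intro k
    induction k with
    | zero =>
      exact ⟨Set.finite_empty, uniqueSumsBelow_empty h, by simp [A, reps_empty (by omega : h ≠ 0)]⟩
    | succ k ih =>
      obtain ⟨-, hfin, hU, hle, -⟩ := hnext (A k) ih.1 ih.2.1 ih.2.2 (e k)
      exact ⟨hfin, hU, hle⟩
  have hstep := fun k => hnext (A k) (hA k).1 (hA k).2.1 (hA k).2.2 (e k)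
  refine ⟨⋃ k, A k, fun n => ?_⟩
  rw [repFn_eq_encard_reps]
  exact encard_reps_iUnion_eq (monotone_nat_of_le_succ fun k => (hstep k).1) he
    (fun k => (hA k).2.2) (fun k => (hstep k).2.2.2.2) n
end

section
/- Let f : ℤ → ℕ∞ with f⁻¹(0) finite, and let u : ℕ → ℤ be a sequence enumerating f (i.e., f(n) = #{k : u_k = n} for all n). Suppose A_1 ⊆ A_2 ⊆ A_3 ⊆ ⋯ is an ascending chain of finite sets of integers such that for all k ≥ 1 and all n ∈ ℤ: r_{A_k,h}(n) ≤ f(n) and r_{A_k,h}(n) ≥ #{i : 1 ≤ i ≤ k, u_i = n}. Then the union A = ⋃_k A_k satisfies r_{A,h}(n) = f(n) for all n ∈ ℤ. -/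
namespace Set

theorem encard_iUnion_of_directed_s16 {α ι : Type*} [Nonempty ι] {s : ι → Set α}
    (hs : Directed (· ⊆ ·) s) : (⋃ i, s i).encard = ⨆ i, (s i).encard := by
  refine le_antisymm (ENat.forall_natCast_le_iff_le.mp fun m hm => ?_)
    (iSup_le fun i => encard_le_encard (subset_iUnion s i))
  obtain ⟨t, hts, htm⟩ := exists_subset_encard_eq hm
  lift t to Finset α using finite_of_encard_eq_coe htm
  obtain ⟨i, hi⟩ := hs.exists_mem_subset_of_finset_subset_biUnion hts
  exact htm ▸ (encard_le_encard hi).trans (le_iSup (fun i => (s i).encard) i)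

end Set

def repSet (A : Set ℤ) (h : ℕ) (n : ℤ) : Set (Fin h → ℤ) :=
  {g | Monotone g ∧ (∀ i, g i ∈ A) ∧ ∑ i, g i = n}

theorem repFn_eq_encard_repSet (A : Set ℤ) (h : ℕ) (n : ℤ) :
    repFn A h n = (repSet A h n).encard :=
  rfl

theorem repSet_mono {A B : Set ℤ} (hAB : A ⊆ B) (h : ℕ) (n : ℤ) :
    repSet A h n ⊆ repSet B h n :=
  fun _ ⟨hg, hA, hsum⟩ => ⟨hg, fun i => hAB (hA i), hsum⟩

theorem repSet_iUnion_of_directed {ι : Type*} [Nonempty ι] {A : ι → Set ℤ}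
    (hA : Directed (· ⊆ ·) A) (h : ℕ) (n : ℤ) :
    repSet (⋃ j, A j) h n = ⋃ j, repSet (A j) h n := by
  refine Set.Subset.antisymm (fun g ⟨hg, hmem, hsum⟩ => ?_)
    (Set.iUnion_subset fun j => repSet_mono (Set.subset_iUnion A j) h n)
  choose j hj using fun i => Set.mem_iUnion.mp (hmem i)
  obtain ⟨z, hz⟩ := hA.finite_le j
  exact Set.mem_iUnion.mpr ⟨z, hg, fun i => hz i (hj i), hsum⟩

theorem repFn_iUnion_of_directed {ι : Type*} [Nonempty ι] {A : ι → Set ℤ}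
    (hA : Directed (· ⊆ ·) A) (h : ℕ) (n : ℤ) :
    repFn (⋃ j, A j) h n = ⨆ j, repFn (A j) h n := by
  simp only [repFn_eq_encard_repSet, repSet_iUnion_of_directed hA]
  exact Set.encard_iUnion_of_directed_s16 fun j k =>
    (hA j k).imp fun _ ⟨hj, hk⟩ => ⟨repSet_mono hj h n, repSet_mono hk h n⟩

theorem union_has_representation_function_general (h : ℕ)
    (f : ℤ → ℕ∞)
    (u : ℕ → ℤ)
    (hu : ∀ n : ℤ, {k : ℕ | 1 ≤ k ∧ u k = n}.encard = f n)
    (A : ℕ → Set ℤ)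
    (hchain : ∀ k : ℕ, 1 ≤ k → A k ⊆ A (k + 1))
    (hle : ∀ k : ℕ, 1 ≤ k → ∀ n : ℤ, repFn (A k) h n ≤ f n)
    (hge : ∀ k : ℕ, 1 ≤ k → ∀ n : ℤ,
      {i : ℕ | 1 ≤ i ∧ i ≤ k ∧ u i = n}.encard ≤ repFn (A k) h n) :
    ∀ n : ℤ, repFn (⋃ k ∈ {k : ℕ | 1 ≤ k}, A k) h n = f n := by
  intro n
  have hA : Monotone fun k => A (k + 1) :=
    monotone_nat_of_le_succ fun k => hchain (k + 1) k.succ_pos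
  have hunion : ⋃ k ∈ {k : ℕ | 1 ≤ k}, A k = ⋃ k, A (k + 1) :=
    Set.iUnion_ge_eq_iUnion_nat_add A 1
  rw [hunion, repFn_iUnion_of_directed hA.directed_le]
  refine le_antisymm (iSup_le fun k => hle (k + 1) k.succ_pos n) ?_
  have hcount : {k | 1 ≤ k ∧ u k = n} = ⋃ k, {i | 1 ≤ i ∧ i ≤ k + 1 ∧ u i = n} := by
    ext i
    simp only [Set.mem_ofPred_eq, Set.mem_iUnion]
    exact ⟨fun ⟨h1, hi⟩ => ⟨i, h1, i.le_succ, hi⟩, fun ⟨_, h1, _, hi⟩ => ⟨h1, hi⟩⟩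
  have hcount_mono : Monotone fun k => {i | 1 ≤ i ∧ i ≤ k + 1 ∧ u i = n} :=
    fun _ _ hkl _ ⟨h1, hik, hi⟩ => ⟨h1, hik.trans (Nat.succ_le_succ hkl), hi⟩
  rw [← hu n, hcount, Set.encard_iUnion_of_directed_s16 hcount_mono.directed_le]
  exact iSup_mono fun k => hge (k + 1) k.succ_pos n

/-- If an ascending chain of finite sets `A₁ ⊆ A₂ ⊆ ⋯` satisfies
`r_{A_k,h}(n) ≤ f(n)` and `r_{A_k,h}(n) ≥ #{i : 1 ≤ i ≤ k, u_i = n}` for all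
`k ≥ 1` and `n`, where `u` enumerates `f`, then the union `A = ⋃ A_k`
satisfies `r_{A,h}(n) = f(n)` for all `n`. -/
theorem union_has_representation_function (h : ℕ)
    (f : ℤ → ℕ∞) (hf : (f ⁻¹' {0}).Finite)
    (u : ℕ → ℤ)
    (hu : ∀ n : ℤ, {k : ℕ | 1 ≤ k ∧ u k = n}.encard = f n)
    (A : ℕ → Set ℤ)
    (hfin : ∀ k : ℕ, 1 ≤ k → (A k).Finite)
    (hchain : ∀ k : ℕ, 1 ≤ k → A k ⊆ A (k + 1))
    (hle : ∀ k : ℕ, 1 ≤ k → ∀ n : ℤ, repFn (A k) h n ≤ f n)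
    (hge : ∀ k : ℕ, 1 ≤ k → ∀ n : ℤ,
      {i : ℕ | 1 ≤ i ∧ i ≤ k ∧ u i = n}.encard ≤ repFn (A k) h n) :
    ∀ n : ℤ, repFn (⋃ k ∈ {k : ℕ | 1 ≤ k}, A k) h n = f n :=
  union_has_representation_function_general h f u hu A hchain hle hge
end

section
/- Let h ≥ 2 and let A, B, ... be constructed as follows: for c > 2hd with d ≥ max{|a| : a ∈ A} for a finite set A ⊆ ℤ, set A' = A ∪ {−c, (h−1)c + u} with 0 ≤ u ≤ d. Then for the decomposition hA' = ⋃_{r=0}^{h} B_r with B_r = r(h−1)c + ru + ⋃_{i=0}^{h−r} (−ic + (h−r−i)A), the sets B_0, B_1 \ {u}, B_2, ..., B_h are pairwise disjoint. -/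
/-- The `j`-fold sumset of `A ⊆ ℤ` (with `0A = {0}`). -/
def sumFold (A : Set ℤ) (j : ℕ) : Set ℤ :=
  {n : ℤ | ∃ g : Fin j → ℤ, (∀ i, g i ∈ A) ∧ ∑ i, g i = n}

/-- In the decomposition `hA' = ⋃_{r=0}^h B_r` of the sumset of
`A' = A ∪ {−c, (h−1)c + u}`, the sets `B_0, B_1 \ {u}, B_2, …, B_h` are
pairwise disjoint. -/
theorem decomposition_pairwise_disjoint (A : Set ℤ) (hA : A.Finite)
    (h : ℕ) (hh : 2 ≤ h) (d c u : ℤ)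
    (hd : ∀ a ∈ A, |a| ≤ d) (hu0 : 0 ≤ u) (hud : u ≤ d)
    (hc : 2 * h * d < c) :
    let B : ℕ → Set ℤ := fun r =>
      ⋃ i ∈ Finset.range (h - r + 1),
        (fun x => (r : ℤ) * ((h : ℤ) - 1) * c + (r : ℤ) * u - (i : ℤ) * c + x) ''
          sumFold A (h - r - i)
    ∀ r s : ℕ, r ≤ h → s ≤ h → r ≠ s →
      Disjoint (if r = 1 then B r \ {u} else B r)
               (if s = 1 then B s \ {u} else B s) := by
  intro B
  have hd0 : 0 ≤ d := le_trans hu0 hud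
  have hc0 : 0 < c := by
    have : (0:ℤ) ≤ 2 * h * d := by positivity
    linarith
  -- bound for sumFold elements
  have sumb : ∀ (k : ℕ) (y : ℤ), y ∈ sumFold A k → |y| ≤ (k : ℤ) * d := by
    intro k y hy
    obtain ⟨g, hg, hsum⟩ := hy
    calc |y| = |∑ i, g i| := by rw [hsum]
      _ ≤ ∑ i, |g i| := Finset.abs_sum_le_sum_abs _ _
      _ ≤ ∑ _i : Fin k, d := Finset.sum_le_sum (fun i _ => hd _ (hg i))
      _ = (k : ℤ) * d := by simp [mul_comm]
  -- extraction from B r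
  have key : ∀ r : ℕ, ∀ x : ℤ, x ∈ B r → ∃ i : ℕ, i ≤ h - r ∧ ∃ y ∈ sumFold A (h - r - i),
      x = (r : ℤ) * ((h : ℤ) - 1) * c + (r : ℤ) * u - (i : ℤ) * c + y := by
    intro r x hx
    simp only [B, Set.mem_iUnion, Set.mem_image, Finset.mem_range, Nat.lt_succ_iff] at hx
    obtain ⟨i, hi, y, hy, hx⟩ := hx
    exact ⟨i, hi, y, hy, hx.symm⟩
  -- main lemma
  have main : ∀ r s : ℕ, r < s → r ≤ h → s ≤ h → ∀ x : ℤ, x ∈ B r → x ∈ B s →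
      s = 1 ∧ x = u := by
    intro r s hrs hr hs x hxr hxs
    obtain ⟨i, hi, y, hy, hxe⟩ := key r x hxr
    obtain ⟨j, hj, z, hz, hxe'⟩ := key s x hxs
    have hyb := sumb _ _ hy
    have hzb := sumb _ _ hz
    have hicast : ((h - r - i : ℕ) : ℤ) = (h : ℤ) - r - i := by omega
    have hjcast : ((h - s - j : ℕ) : ℤ) = (h : ℤ) - s - j := by omega
    rw [hicast] at hyb
    rw [hjcast] at hzb
    set fr : ℤ := (r : ℤ) * ((h : ℤ) - 1) - i with hfr
    set fs : ℤ := (s : ℤ) * ((h : ℤ) - 1) - j with hfs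
    have heq : (fr - fs) * c = ((s : ℤ) * u + z) - ((r : ℤ) * u + y) := by
      have := hxe.symm.trans hxe'
      rw [hfr, hfs]; ring_nf; ring_nf at this; linarith
    -- bounds on the error terms
    have herb : |(r : ℤ) * u + y| ≤ (h : ℤ) * d := by
      have h1 : |(r : ℤ) * u| ≤ (r : ℤ) * d := by
        rw [abs_of_nonneg (by positivity)]
        exact mul_le_mul_of_nonneg_left hud (by positivity)
      have h2 : ((h : ℤ) - r - i) * d ≤ ((h : ℤ) - r) * d := by
        apply mul_le_mul_of_nonneg_right _ hd0
        have : (0:ℤ) ≤ i := by positivity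
        linarith
      calc |(r : ℤ) * u + y| ≤ |(r : ℤ) * u| + |y| := abs_add_le _ _
        _ ≤ (r : ℤ) * d + ((h : ℤ) - r) * d := by linarith
        _ = (h : ℤ) * d := by ring
    have hesb : |(s : ℤ) * u + z| ≤ (h : ℤ) * d := by
      have h1 : |(s : ℤ) * u| ≤ (s : ℤ) * d := by
        rw [abs_of_nonneg (by positivity)]
        exact mul_le_mul_of_nonneg_left hud (by positivity)
      have h2 : ((h : ℤ) - s - j) * d ≤ ((h : ℤ) - s) * d := by
        apply mul_le_mul_of_nonneg_right _ hd0
        have : (0:ℤ) ≤ j := by positivity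
        linarith
      calc |(s : ℤ) * u + z| ≤ |(s : ℤ) * u| + |z| := abs_add_le _ _
        _ ≤ (s : ℤ) * d + ((h : ℤ) - s) * d := by linarith
        _ = (h : ℤ) * d := by ring
    have hff : fr = fs := by
      by_contra hne
      have h1 : (1 : ℤ) ≤ |fr - fs| := Int.one_le_abs (sub_ne_zero.mpr hne)
      have h2 : c ≤ |fr - fs| * c := by
        nlinarith
      have h3 : |fr - fs| * c = |((s : ℤ) * u + z) - ((r : ℤ) * u + y)| := by
        rw [← heq, abs_mul, abs_of_pos hc0]
      have h4 : |((s : ℤ) * u + z) - ((r : ℤ) * u + y)| ≤ 2 * h * d := by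
        calc |((s : ℤ) * u + z) - ((r : ℤ) * u + y)|
            ≤ |(s : ℤ) * u + z| + |(r : ℤ) * u + y| := abs_sub _ _
          _ ≤ 2 * h * d := by linarith
      linarith
    -- now fr = fs forces r = 0, s = 1, i = 0, j = h - 1
    have hri : (r : ℤ) * ((h : ℤ) - 1) - i = (s : ℤ) * ((h : ℤ) - 1) - j := hff
    have hjji : (j : ℤ) - i = ((s : ℤ) - r) * ((h : ℤ) - 1) := by linarith [hri]
    have hsr1 : (1 : ℤ) ≤ (s : ℤ) - r := by omega
    have hh1 : (1 : ℤ) ≤ (h : ℤ) - 1 := by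
      have : (2 : ℤ) ≤ h := by exact_mod_cast hh
      linarith
    have hprod : (h : ℤ) - 1 ≤ (j : ℤ) - i := by
      have hm : 1 * ((h : ℤ) - 1) ≤ ((s : ℤ) - r) * ((h : ℤ) - 1) :=
        mul_le_mul_of_nonneg_right hsr1 (by linarith)
      rw [hjji]; linarith
    have hjle : (j : ℤ) ≤ (h : ℤ) - s := by
      have : (j : ℤ) ≤ ((h - s : ℕ) : ℤ) := by exact_mod_cast hj
      omega
    have hile : (0 : ℤ) ≤ i := by positivity
    have hs1 : s = 1 := by
      have hsi : (s : ℤ) ≤ 1 := by linarith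
      have : (1 : ℤ) ≤ s := by linarith
      exact_mod_cast le_antisymm hsi this
    refine ⟨hs1, ?_⟩
    have hr0 : r = 0 := by omega
    have hjeq : (j : ℤ) = (h : ℤ) - 1 := by
      subst hs1; omega
    have hjn : j = h - 1 := by omega
    -- z ∈ sumFold A 0, so z = 0
    have hz0 : z = 0 := by
      have h0 : h - s - j = 0 := by omega
      rw [h0] at hz
      obtain ⟨g, _, hsum⟩ := hz
      simpa using hsum.symm
    rw [hxe', hz0, hs1, hjn]
    have : ((h - 1 : ℕ) : ℤ) = (h : ℤ) - 1 := by omega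
    rw [this]; push_cast; ring
  -- conclude
  intro r s hr hs hrs
  rw [Set.disjoint_left]
  intro x hx1 hx2
  have hxr : x ∈ B r := by
    by_cases h1 : r = 1
    · simp only [h1, if_pos] at hx1; rw [h1]; exact hx1.1
    · simp only [h1, if_neg, if_false] at hx1; exact hx1
  have hxs : x ∈ B s := by
    by_cases h1 : s = 1
    · simp only [h1, if_pos] at hx2; rw [h1]; exact hx2.1
    · simp only [h1, if_neg, if_false] at hx2; exact hx2
  rcases lt_or_gt_of_ne hrs with hlt | hgt
  · obtain ⟨hs1, hxu⟩ := main r s hlt hr hs x hxr hxs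
    rw [if_pos hs1] at hx2
    exact hx2.2 hxu
  · obtain ⟨hr1, hxu⟩ := main s r hgt hs hr x hxs hxr
    rw [if_pos hr1] at hx1
    exact hx1.2 hxu
end
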